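/- arXiv:1106.6298 — 5 statements merged into one kernel-verified Lean document; each statement's English description precedes it below -/
import Mathlib

section
/- If m and n are distinct positive integers such that m/n is not of the form p^e for any prime p and nonzero integer e, then the ideal of ℤ[q] generated by Φ_n(q) and Φ_m(q) is the unit ideal (1). -/
open Polynomial

universe u

/-!
If `(Φ_n, Φ_m)` were a proper ideal of `ℤ[q]`, the image `μ` of `q` in a residue field `K` at a
maximal ideal containing it would be a common root of `Φ_n` and `Φ_m`. In characteristic `0`, `μ`
is then a primitive `n`-th and a primitive `m`-th root of unity, so `n = m`. In characteristic
`p`, the same holds for the prime-to-`p` parts of `n` and `m`, so `m / n` is a power of `p`,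
with nonzero exponent since `m ≠ n`.
-/

theorem Ideal.exists_field_aeval_eq_zero_of_span_ne_top {R : Type u} [CommRing R] {s : Set R[X]}
    (hs : Ideal.span s ≠ ⊤) :
    ∃ (K : Type u) (_ : Field K) (_ : Algebra R K) (x : K), ∀ f ∈ s, aeval x f = 0 := by
  obtain ⟨M, hM, hsM⟩ := Ideal.exists_le_maximal _ hs
  refine ⟨R[X] ⧸ M, Ideal.Quotient.field M, inferInstance, Ideal.Quotient.mk M X, fun f hf => ?_⟩
  rw [← Ideal.Quotient.mkₐ_eq_mk R, aeval_algHom_apply, aeval_X_left_apply,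
    Ideal.Quotient.mkₐ_eq_mk, Ideal.Quotient.eq_zero_iff_mem]
  exact hsM (Ideal.subset_span hf)

theorem Polynomial.IsRoot.isPrimitiveRoot_ordCompl_ringChar {K : Type*} [Field K] {n : ℕ} {μ : K}
    (h : (cyclotomic n K).IsRoot μ) : IsPrimitiveRoot μ (ordCompl[ringChar K] n) := by
  -- in characteristic `0` this says `IsPrimitiveRoot μ n`, as `ordCompl[0] n = n`
  have hn : n ≠ 0 := by rintro rfl; simp at h
  rcases CharP.char_is_prime_or_zero K (ringChar K) with hp | hp
  · have := Fact.mk hp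
    have : NeZero ((ordCompl[ringChar K] n : ℕ) : K) :=
      NeZero.of_not_dvd K (Nat.not_dvd_ordCompl hp hn)
    rw [← Nat.ordProj_mul_ordCompl_eq_self n (ringChar K)] at h
    exact isRoot_cyclotomic_prime_pow_mul_iff_of_charP.1 h
  · have : CharZero K := (CharP.ringChar_zero_iff_CharZero K).1 hp
    have : NeZero (n : K) := ⟨Nat.cast_ne_zero.2 hn⟩
    simpa [hp] using isRoot_cyclotomic_iff.1 h

theorem Nat.exists_zpow_eq_div_of_ordCompl_eq {p m n : ℕ} (hp : p.Prime) (hmn : m ≠ n)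
    (h : ordCompl[p] m = ordCompl[p] n) : ∃ e : ℤ, e ≠ 0 ∧ (m : ℚ) / n = (p : ℚ) ^ e := by
  have hm := Nat.ordProj_mul_ordCompl_eq_self m p
  have hn := Nat.ordProj_mul_ordCompl_eq_self n p
  rw [h] at hm
  generalize ordCompl[p] n = k at hm hn
  have hk : k ≠ 0 := by
    rintro rfl
    rw [mul_zero] at hm hn
    exact hmn (hm.symm.trans hn)
  refine ⟨(m.factorization p : ℤ) - n.factorization p, ?_, ?_⟩
  · rw [sub_ne_zero, Ne, Nat.cast_inj]
    intro he
    rw [he, hn] at hm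
    exact hmn hm.symm
  · conv_lhs => rw [← hm, ← hn]
    rw [zpow_sub₀ (by exact_mod_cast hp.ne_zero), zpow_natCast, zpow_natCast]
    push_cast
    exact mul_div_mul_right _ _ (by exact_mod_cast hk)

theorem stmt2_general (m n : ℕ) (hmn : m ≠ n)
    (h : ∀ p : ℕ, p.Prime → ∀ e : ℤ, e ≠ 0 → (m : ℚ) / n ≠ (p : ℚ) ^ e) :
    Ideal.span {cyclotomic n ℤ, cyclotomic m ℤ} = ⊤ := by
  by_contra hI
  obtain ⟨K, _, _, μ, hμ⟩ := Ideal.exists_field_aeval_eq_zero_of_span_ne_top hI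
  have hroot (k : ℕ) (hk : aeval μ (cyclotomic k ℤ) = 0) : (cyclotomic k K).IsRoot μ := by
    rwa [aeval_def, eval₂_eq_eval_map, map_cyclotomic] at hk
  have hordCompl : ordCompl[ringChar K] m = ordCompl[ringChar K] n :=
    (hroot m (hμ _ (by simp))).isPrimitiveRoot_ordCompl_ringChar.unique
      (hroot n (hμ _ (by simp))).isPrimitiveRoot_ordCompl_ringChar
  rcases CharP.char_is_prime_or_zero K (ringChar K) with hp | hp
  · obtain ⟨e, he, hdiv⟩ := Nat.exists_zpow_eq_div_of_ordCompl_eq hp hmn hordCompl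
    exact h _ hp e he hdiv
  · exact hmn (by simpa [hp] using hordCompl)

/-- If distinct positive integers `m, n` do not differ multiplicatively by a nonzero
power of a prime, then `(Φ_n) + (Φ_m) = (1)` in `ℤ[q]`. -/
theorem stmt2 (m n : ℕ) (hm : 0 < m) (hn : 0 < n) (hmn : m ≠ n)
    (h : ∀ p : ℕ, p.Prime → ∀ e : ℤ, e ≠ 0 → (m : ℚ) / n ≠ (p : ℚ) ^ e) :
    Ideal.span {cyclotomic n ℤ, cyclotomic m ℤ} = ⊤ :=
  stmt2_general m n hmn h
end

section
/- Let ξ be a primitive root of unity of odd order r, let b be a positive integer, set c = gcd(r,b), b₁ = b/c, r₁ = r/c. Then the generalized Gauss sum satisfies γ_b(ξ) = c·γ_{b₁}(ξ^c), where γ_b(ξ) = Σ_{0<n<2r, n odd} ξ^{b(n²-1)/4}. -/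
open Finset

/-! Writing odd `n = 2m + 1` turns the summand into `ξ ^ (b m (m + 1))`. With `c = gcd r b` this is
periodic in `m` with period `r / c`, since `b (r / c) = (b / c) r` is a multiple of the order `r`.
So the `r = c (r / c)` terms form `c` copies of one period, and `ξ ^ (b k) = (ξ ^ c) ^ ((b / c) k)`. -/

theorem Function.Periodic.sum_range_mul {M : Type*} [AddCommMonoid M] {f : ℕ → M} {p : ℕ}
    (hf : Function.Periodic f p) (k : ℕ) :
    ∑ i ∈ range (p * k), f i = k • ∑ i ∈ range p, f i := by
  induction k with
  | zero => simp
  | succ k ih =>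
    rw [Nat.mul_succ, sum_range_add, ih, succ_nsmul]
    congr 1
    refine sum_congr rfl fun i _ => ?_
    rw [add_comm, mul_comm]
    exact_mod_cast hf.nat_mul k i

theorem Finset.sum_filter_odd_range_two_mul {M : Type*} [AddCommMonoid M] (f : ℕ → M) (r : ℕ) :
    ∑ n ∈ (range (2 * r)).filter Odd, f n = ∑ m ∈ range r, f (2 * m + 1) := by
  induction r with
  | zero => simp
  | succ r ih =>
    rw [show 2 * (r + 1) = 2 * r + 1 + 1 by ring, range_add_one, range_add_one, filter_insert,
      filter_insert, if_pos (odd_two_mul_add_one r), if_neg (by simp), sum_insert (by simp),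
      ih, sum_range_succ, add_comm]

theorem Nat.mul_odd_sq_sub_one_div_four (b m : ℕ) :
    b * ((2 * m + 1) ^ 2 - 1) / 4 = b * (m * (m + 1)) := by
  rw [show (2 * m + 1) ^ 2 - 1 = 4 * (m * (m + 1)) by
    rw [show (2 * m + 1) ^ 2 = 4 * (m * (m + 1)) + 1 by ring, Nat.add_sub_cancel]]
  rw [mul_left_comm, Nat.mul_div_cancel_left _ (by norm_num)]

section

variable {R : Type*} [CommSemiring R]

/-- The paper's `γ_b(ξ)`, with `r` the order of `ξ`. -/
def oddGaussSum (ξ : R) (b r : ℕ) : R :=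
  ∑ n ∈ (range (2 * r)).filter Odd, ξ ^ (b * (n ^ 2 - 1) / 4)

theorem oddGaussSum_eq_sum_range (ξ : R) (b r : ℕ) :
    oddGaussSum ξ b r = ∑ m ∈ range r, ξ ^ (b * (m * (m + 1))) := by
  simp only [oddGaussSum, sum_filter_odd_range_two_mul, Nat.mul_odd_sq_sub_one_div_four]

theorem periodic_pow_mul_pronic {ξ : R} {r b s : ℕ} (hξ : ξ ^ r = 1) (hrs : r ∣ b * s) :
    Function.Periodic (fun m : ℕ => ξ ^ (b * (m * (m + 1)))) s := by
  obtain ⟨t, ht⟩ := hrs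
  intro m
  have : b * ((m + s) * (m + s + 1)) = b * (m * (m + 1)) + r * (t * (2 * m + s + 1)) := by
    rw [show r * (t * (2 * m + s + 1)) = b * s * (2 * m + s + 1) by rw [ht, mul_assoc]]
    ring
  simp only [this, pow_add, pow_mul, hξ, one_pow, mul_one]

theorem oddGaussSum_eq_gcd_mul {ξ : R} {r : ℕ} (hξ : ξ ^ r = 1) (b : ℕ) :
    oddGaussSum ξ b r
      = r.gcd b * oddGaussSum (ξ ^ r.gcd b) (b / r.gcd b) (r / r.gcd b) := by
  set c := r.gcd b
  set r₁ := r / c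
  set b₁ := b / c
  have hr : r = r₁ * c := (Nat.div_mul_cancel (Nat.gcd_dvd_left r b)).symm
  have hb : b = c * b₁ := (Nat.mul_div_cancel' (Nat.gcd_dvd_right r b)).symm
  have hper : Function.Periodic (fun m : ℕ => ξ ^ (b * (m * (m + 1)))) r₁ :=
    periodic_pow_mul_pronic hξ ⟨b₁, by rw [hb, hr]; ring⟩
  rw [oddGaussSum_eq_sum_range, oddGaussSum_eq_sum_range]
  calc ∑ m ∈ range r, ξ ^ (b * (m * (m + 1)))
      = c • ∑ m ∈ range r₁, ξ ^ (b * (m * (m + 1))) := by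
        rw [← hper.sum_range_mul, ← hr]
    _ = c * ∑ m ∈ range r₁, (ξ ^ c) ^ (b₁ * (m * (m + 1))) := by
        rw [nsmul_eq_mul, hb]
        simp only [← pow_mul, mul_assoc]

end

theorem stmt5_general (r b : ℕ)
    (ξ : ℂ) (hξ : IsPrimitiveRoot ξ r) :
    (∑ n ∈ (range (2 * r)).filter (fun n => Odd n), ξ ^ (b * (n ^ 2 - 1) / 4))
      = (Nat.gcd r b) *
        ∑ n ∈ (range (2 * (r / Nat.gcd r b))).filter (fun n => Odd n),
          (ξ ^ Nat.gcd r b) ^ ((b / Nat.gcd r b) * (n ^ 2 - 1) / 4) :=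
  oddGaussSum_eq_gcd_mul hξ.pow_eq_one b

/-- For `ξ` a primitive root of unity of odd order `r`, `b > 0`, `c = gcd(r,b)`,
`b₁ = b/c`, `r₁ = r/c`, the Gauss sum `γ_b(ξ) = Σ_{0<n<2r, n odd} ξ^{b(n²-1)/4}`
satisfies `γ_b(ξ) = c · γ_{b₁}(ξ^c)`. -/
theorem stmt5 (r b : ℕ) (hr : Odd r) (hr0 : 0 < r) (hb : 0 < b)
    (ξ : ℂ) (hξ : IsPrimitiveRoot ξ r) :
    (∑ n ∈ (range (2 * r)).filter (fun n => Odd n), ξ ^ (b * (n ^ 2 - 1) / 4))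
      = (Nat.gcd r b) *
        ∑ n ∈ (range (2 * (r / Nat.gcd r b))).filter (fun n => Odd n),
          (ξ ^ Nat.gcd r b) ^ ((b / Nat.gcd r b) * (n ^ 2 - 1) / 4) :=
  stmt5_general r b ξ hξ
end

section
/- The Rogers–Ramanujan identity holds as an identity of formal power series: ∏_{k≥1} 1/((1-q^{5k-4})(1-q^{5k-1})) = Σ_{n≥0} q^{n²}/((1-q)(1-q²)···(1-q^n)). -/
open Finset PowerSeries

/-!
Schur's polynomials `D n` have two expansions, `∑ₖ q^(k²) [n-k, k]_q` and
`∑ⱼ (-1)^j q^(j(5j+1)/2) [n, ⌊(n-5j)/2⌋]_q`: both satisfy `D (n+2) = D (n+1) + q^(n+1) D n`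
with `D 0 = D 1 = 1`. As `n → ∞` the first tends to the Rogers–Ramanujan sum and the second
to `θ / (q;q)_∞` with `θ = ∑ⱼ (-1)^j q^(j(5j+1)/2)`. The finite Jacobi triple product
identity in base `q^5` gives `θ = ∏ₖ (1-q^(5k+2)) (1-q^(5k+3)) (1-q^(5k+5))`, and splitting
`(q;q)_∞` by residues mod 5 leaves `∏ₖ 1/((1-q^(5k+1)) (1-q^(5k+4)))`. The limits are taken
as congruences modulo `X^r`, which determine all coefficients below degree `r`.
-/

namespace RogersRamanujan

noncomputable section

section GaussBinom

variable {A : Type*} [CommRing A] (q : A)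

def qPochhammer (n : ℕ) : A := ∏ i ∈ range n, (1 - q ^ (i + 1))

def gaussBinom : ℕ → ℕ → A
  | _, 0 => 1
  | 0, _ + 1 => 0
  | n + 1, k + 1 => gaussBinom n k + q ^ (k + 1) * gaussBinom n (k + 1)

lemma qPochhammer_succ (n : ℕ) : qPochhammer q (n + 1) = qPochhammer q n * (1 - q ^ (n + 1)) :=
  prod_range_succ _ _

lemma qPochhammer_five_mul (r : ℕ) :
    qPochhammer q (5 * r) = (∏ k ∈ range r, (1 - q ^ (5 * k + 1)) * (1 - q ^ (5 * k + 4))) *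
      (∏ k ∈ range r, (1 - q ^ (5 * k + 2)) * (1 - q ^ (5 * k + 3))) *
        qPochhammer (q ^ 5) r := by
  induction r with
  | zero => simp [qPochhammer]
  | succ r ih =>
    rw [show 5 * (r + 1) = 5 * r + 1 + 1 + 1 + 1 + 1 by ring]
    simp only [qPochhammer_succ, prod_range_succ, ih]
    ring

@[simp] lemma gaussBinom_zero_right (n : ℕ) : gaussBinom q n 0 = 1 := by cases n <;> rfl

@[simp] lemma gaussBinom_zero_succ (k : ℕ) : gaussBinom q 0 (k + 1) = 0 := rfl

lemma gaussBinom_succ_succ (n k : ℕ) :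
    gaussBinom q (n + 1) (k + 1) = gaussBinom q n k + q ^ (k + 1) * gaussBinom q n (k + 1) := rfl

lemma gaussBinom_eq_zero_of_lt {n k : ℕ} (h : n < k) : gaussBinom q n k = 0 := by
  induction n generalizing k with
  | zero => obtain ⟨k, rfl⟩ := Nat.exists_eq_add_one_of_ne_zero h.ne'; rfl
  | succ n ih =>
    obtain ⟨k, rfl⟩ := Nat.exists_eq_add_one_of_ne_zero (by omega : k ≠ 0)
    rw [gaussBinom_succ_succ, ih (by omega), ih (by omega), mul_zero, add_zero]

@[simp] lemma gaussBinom_self (n : ℕ) : gaussBinom q n n = 1 := by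
  induction n with
  | zero => rfl
  | succ n ih =>
    rw [gaussBinom_succ_succ, ih, gaussBinom_eq_zero_of_lt q n.lt_succ_self, mul_zero, add_zero]

-- Valid for every `k`: if `n < k` both sides vanish, whatever `n - k` truncates to.
lemma gaussBinom_succ_succ' (n k : ℕ) :
    gaussBinom q (n + 1) (k + 1) = gaussBinom q n (k + 1) + q ^ (n - k) * gaussBinom q n k := by
  induction n generalizing k with
  | zero => cases k <;> simp [gaussBinom_succ_succ]
  | succ n ih =>
    cases k with
    | zero =>
      have d1 := gaussBinom_succ_succ q (n + 1) 0
      have d2 := gaussBinom_succ_succ q n 0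
      have h0 := ih 0
      simp only [gaussBinom_zero_right, zero_add, pow_one, Nat.sub_zero, mul_one] at d1 d2 h0 ⊢
      linear_combination d1 + q * h0 - d2
    | succ k =>
      have e1 := gaussBinom_succ_succ q (n + 1) (k + 1)
      rw [Nat.add_sub_add_right]
      rcases lt_or_ge k n with hk | hk
      · have e2 := gaussBinom_succ_succ q n k
        have e3 := gaussBinom_succ_succ q n (k + 1)
        have e4 : q ^ (k + 2) * q ^ (n - (k + 1)) = q ^ (n - k) * q ^ (k + 1) := by
          rw [← pow_add, ← pow_add]; congr 1; omega
        linear_combination e1 + ih k + q ^ (k + 2) * ih (k + 1) - e3 - q ^ (n - k) * e2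
          + gaussBinom q n (k + 1) * e4
      · rw [gaussBinom_eq_zero_of_lt q (by omega : n + 1 < k + 1 + 1)] at e1 ⊢
        rw [Nat.sub_eq_zero_of_le hk, e1]
        ring

lemma gaussBinom_mul_qPochhammer {n k : ℕ} (h : k ≤ n) :
    gaussBinom q n k * qPochhammer q k * qPochhammer q (n - k) = qPochhammer q n := by
  induction n generalizing k with
  | zero => obtain rfl := Nat.le_zero.mp h; simp [qPochhammer]
  | succ n ih =>
    cases k with
    | zero => simp [qPochhammer]
    | succ k =>
      rw [gaussBinom_succ_succ, Nat.add_sub_add_right, qPochhammer_succ, qPochhammer_succ]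
      rcases lt_or_ge k n with hk | hk
      · have h1 := ih (k := k) (by omega)
        have h2 := ih (k := k + 1) hk
        obtain ⟨d, hd⟩ := Nat.exists_eq_add_of_lt hk
        rw [show n - k = d + 1 by omega, qPochhammer_succ] at h1
        rw [show n - (k + 1) = d by omega, qPochhammer_succ] at h2
        rw [show n - k = d + 1 by omega, qPochhammer_succ]
        have : q ^ (k + 1) * q ^ (d + 1) = q ^ (n + 1) := by rw [← pow_add]; congr 1; omega
        linear_combination (1 - q ^ (k + 1)) * h1 + q ^ (k + 1) * (1 - q ^ (d + 1)) * h2 -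
          qPochhammer q n * this
      · obtain rfl : k = n := by omega
        simp [gaussBinom_eq_zero_of_lt q (by omega : k < k + 1), qPochhammer]

def gaussBinomInt (n : ℕ) (k : ℤ) : A := if 0 ≤ k then gaussBinom q n k.toNat else 0

@[simp] lemma gaussBinomInt_natCast (n k : ℕ) : gaussBinomInt q n k = gaussBinom q n k := by
  simp [gaussBinomInt]

lemma gaussBinomInt_eq_zero {n : ℕ} {k : ℤ} (h : k < 0 ∨ n < k) :
    gaussBinomInt q n k = 0 := by
  unfold gaussBinomInt
  split_ifs
  · exact gaussBinom_eq_zero_of_lt q (by omega)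
  · rfl

@[simp] lemma gaussBinomInt_zero_right (n : ℕ) : gaussBinomInt q n 0 = 1 := by
  simp [gaussBinomInt]

lemma gaussBinomInt_succ (n : ℕ) (k : ℤ) :
    gaussBinomInt q (n + 1) k = gaussBinomInt q n (k - 1) + q ^ k.toNat * gaussBinomInt q n k := by
  rcases lt_or_ge k 0 with hk | hk
  · simp [gaussBinomInt_eq_zero q (.inl hk), gaussBinomInt_eq_zero q (.inl (by omega : k - 1 < 0))]
  lift k to ℕ using hk
  cases k with
  | zero => simp [gaussBinomInt_eq_zero q (.inl (by omega : (-1 : ℤ) < 0))]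
  | succ k =>
    rw [show ((k + 1 : ℕ) : ℤ) - 1 = k by push_cast; ring, Int.toNat_natCast,
      gaussBinomInt_natCast, gaussBinomInt_natCast, gaussBinomInt_natCast, gaussBinom_succ_succ]

lemma gaussBinomInt_succ' (n : ℕ) (k : ℤ) :
    gaussBinomInt q (n + 1) k =
      gaussBinomInt q n k + q ^ (n + 1 - k).toNat * gaussBinomInt q n (k - 1) := by
  rcases lt_or_ge k 0 with hk | hk
  · simp [gaussBinomInt_eq_zero q (.inl hk), gaussBinomInt_eq_zero q (.inl (by omega : k - 1 < 0))]
  lift k to ℕ using hk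
  cases k with
  | zero => simp [gaussBinomInt_eq_zero q (.inl (by omega : (-1 : ℤ) < 0))]
  | succ k =>
    rw [show ((k + 1 : ℕ) : ℤ) - 1 = k by push_cast; ring,
      show (n + 1 - ((k + 1 : ℕ) : ℤ)).toNat = n - k by omega, gaussBinomInt_natCast,
      gaussBinomInt_natCast, gaussBinomInt_natCast, gaussBinom_succ_succ']

lemma mul_gaussBinomInt_congr {x y : A} {n : ℕ} {k : ℤ} (h : 0 ≤ k → k ≤ n → x = y) :
    x * gaussBinomInt q n k = y * gaussBinomInt q n k := by
  by_cases hk : 0 ≤ k ∧ k ≤ n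
  · rw [h hk.1 hk.2]
  · rw [gaussBinomInt_eq_zero q (by omega), mul_zero, mul_zero]

end GaussBinom

section IccSums

variable {M : Type*} [AddCommMonoid M]

lemma sum_Icc_eq_sum_Icc_of_support {f : ℤ → M} {a b c d : ℤ} (hca : c ≤ a) (hbd : b ≤ d)
    (hf : ∀ j, f j ≠ 0 → a ≤ j ∧ j ≤ b) :
    ∑ j ∈ Icc c d, f j = ∑ j ∈ Icc a b, f j := by
  refine (sum_subset (Icc_subset_Icc hca hbd) fun j _ hj => ?_).symm
  by_contra h
  exact hj (mem_Icc.2 (hf j h))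

lemma sum_Icc_comp_add_one (f : ℤ → M) {a b : ℤ} (ha : f a = 0) (hb : f (b + 1) = 0) :
    ∑ j ∈ Icc a b, f (j + 1) = ∑ j ∈ Icc a b, f j := by
  have hshift : ∑ j ∈ Icc a b, f (j + 1) = ∑ j ∈ Icc (a + 1) (b + 1), f j := by
    rw [← map_add_right_Icc, sum_map]
    rfl
  rw [hshift]
  refine sum_congr_of_eq_on_inter (fun j hj hj' => ?_) (fun j hj hj' => ?_) fun _ _ _ => rfl
  · simp only [mem_Icc] at hj hj'
    rwa [show j = b + 1 by omega]
  · simp only [mem_Icc] at hj hj'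
    rwa [show j = a by omega]

lemma sum_Icc_comp_sub_one (f : ℤ → M) {a b : ℤ} (ha : f (a - 1) = 0) (hb : f b = 0) :
    ∑ j ∈ Icc a b, f (j - 1) = ∑ j ∈ Icc a b, f j := by
  simpa using (sum_Icc_comp_add_one (fun j => f (j - 1)) ha (by simpa using hb)).symm

end IccSums

def rrExponent (j : ℤ) : ℕ := ((5 * j ^ 2 + j) / 2).toNat

lemma two_mul_rrExponent (j : ℤ) : 2 * (rrExponent j : ℤ) = 5 * j ^ 2 + j := by
  have hdvd : (2 : ℤ) ∣ 5 * j ^ 2 + j := by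
    rw [show 5 * j ^ 2 + j = 2 * (2 * j ^ 2) + j * (j + 1) by ring]
    exact dvd_add (dvd_mul_right _ _) (Int.even_mul_succ_self j).two_dvd
  have hnonneg : 0 ≤ 5 * j ^ 2 + j := by nlinarith
  rw [rrExponent, Int.toNat_of_nonneg (Int.ediv_nonneg hnonneg (by norm_num)),
    Int.mul_ediv_cancel' hdvd]

lemma rrExponent_add_one (j : ℤ) : (rrExponent (j + 1) : ℤ) = rrExponent j + 5 * j + 3 := by
  have h₁ := two_mul_rrExponent (j + 1)
  have h₀ := two_mul_rrExponent j
  ring_nf at h₁ h₀ ⊢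
  omega

lemma sq_le_rrExponent (j : ℤ) : j ^ 2 ≤ rrExponent j := by
  nlinarith [two_mul_rrExponent j]

section FiniteJacobi

variable {A : Type*} [CommRing A] (q : A)

def jacobiTerm (a b : ℕ) (j : ℤ) : A :=
  j.negOnePow • (q ^ rrExponent j * gaussBinomInt (q ^ 5) (a + b) (b + j))

def finiteJacobi (a b : ℕ) : A := ∑ j ∈ Icc (-(b : ℤ)) a, jacobiTerm q a b j

lemma jacobiTerm_eq_zero {a b : ℕ} {j : ℤ} (h : j < -b ∨ a < j) : jacobiTerm q a b j = 0 := by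
  rw [jacobiTerm, gaussBinomInt_eq_zero (q ^ 5) (by push_cast; omega), mul_zero, smul_zero]

lemma jacobiTerm_succ_left (a b : ℕ) (j : ℤ) :
    jacobiTerm q (a + 1) b j = jacobiTerm q a b j - q ^ (5 * a + 3) * jacobiTerm q a b (j - 1) := by
  have hexp : q ^ rrExponent j * (q ^ 5) ^ ((a + b : ℕ) + 1 - (b + j)).toNat *
      gaussBinomInt (q ^ 5) (a + b) (b + j - 1) =
      q ^ (5 * a + 3 + rrExponent (j - 1)) * gaussBinomInt (q ^ 5) (a + b) (b + (j - 1)) := by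
    rw [← pow_mul, ← pow_add, add_sub_assoc']
    refine mul_gaussBinomInt_congr _ fun h₀ h₁ => congrArg (q ^ ·) ?_
    have := rrExponent_add_one (j - 1)
    rw [sub_add_cancel] at this
    push_cast at h₁
    omega
  rw [jacobiTerm, jacobiTerm, jacobiTerm, add_right_comm, gaussBinomInt_succ', Int.negOnePow_sub,
    Int.negOnePow_one]
  simp only [Units.smul_def, zsmul_eq_mul, Units.val_mul, Units.val_neg, Units.val_one,
    Int.cast_mul, Int.cast_neg, Int.cast_one]
  linear_combination (j.negOnePow : A) * hexp

lemma jacobiTerm_succ_right (a b : ℕ) (j : ℤ) :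
    jacobiTerm q a (b + 1) j = jacobiTerm q a b j - q ^ (5 * b + 2) * jacobiTerm q a b (j + 1) := by
  have hexp : q ^ rrExponent j * (q ^ 5) ^ (b + 1 + j).toNat *
      gaussBinomInt (q ^ 5) (a + b) (b + 1 + j) =
      q ^ (5 * b + 2 + rrExponent (j + 1)) * gaussBinomInt (q ^ 5) (a + b) (b + (j + 1)) := by
    rw [← pow_mul, ← pow_add, show (b : ℤ) + (j + 1) = b + 1 + j by ring]
    refine mul_gaussBinomInt_congr _ fun h₀ h₁ => congrArg (q ^ ·) ?_
    have := rrExponent_add_one j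
    omega
  rw [jacobiTerm, jacobiTerm, jacobiTerm, ← add_assoc, Nat.cast_succ, gaussBinomInt_succ,
    show (b : ℤ) + 1 + j - 1 = b + j by ring, Int.negOnePow_succ]
  simp only [Units.smul_def, zsmul_eq_mul, Units.val_neg, Int.cast_neg]
  linear_combination (j.negOnePow : A) * hexp

lemma sum_jacobiTerm {a b : ℕ} {c d : ℤ} (hc : c ≤ -b) (hd : a ≤ d) :
    ∑ j ∈ Icc c d, jacobiTerm q a b j = finiteJacobi q a b :=
  sum_Icc_eq_sum_Icc_of_support hc hd fun j hj => by
    by_contra h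
    exact hj (jacobiTerm_eq_zero q (by omega))

lemma finiteJacobi_succ_left (a b : ℕ) :
    finiteJacobi q (a + 1) b = (1 - q ^ (5 * a + 3)) * finiteJacobi q a b := by
  rw [finiteJacobi]
  simp_rw [jacobiTerm_succ_left]
  rw [sum_sub_distrib, ← mul_sum, sum_Icc_comp_sub_one _ (jacobiTerm_eq_zero q (by omega))
    (jacobiTerm_eq_zero q (by omega)), sum_jacobiTerm q le_rfl (by omega)]
  ring

lemma finiteJacobi_succ_right (a b : ℕ) :
    finiteJacobi q a (b + 1) = (1 - q ^ (5 * b + 2)) * finiteJacobi q a b := by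
  rw [finiteJacobi]
  simp_rw [jacobiTerm_succ_right]
  rw [sum_sub_distrib, ← mul_sum, sum_Icc_comp_add_one _ (jacobiTerm_eq_zero q (by omega))
    (jacobiTerm_eq_zero q (by omega)), sum_jacobiTerm q (by omega) le_rfl]
  ring

theorem finiteJacobi_eq_prod (a b : ℕ) :
    finiteJacobi q a b =
      (∏ k ∈ range a, (1 - q ^ (5 * k + 3))) * ∏ k ∈ range b, (1 - q ^ (5 * k + 2)) := by
  induction a with
  | zero =>
    induction b with
    | zero => simp [finiteJacobi, jacobiTerm, rrExponent]
    | succ b ih => rw [finiteJacobi_succ_right, ih, prod_range_succ]; ring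
  | succ a ih => rw [finiteJacobi_succ_left, ih, prod_range_succ]; ring

end FiniteJacobi

section Schur

variable {A : Type*} [CommRing A] (q : A)

def thetaSum (m : ℕ) : A := ∑ j ∈ Icc (-(m : ℤ)) m, j.negOnePow • q ^ rrExponent j

def schurPoly (n : ℕ) : A := ∑ k ∈ range (n + 1), q ^ (k ^ 2) * gaussBinom q (n - k) k

def schurTerm (n : ℕ) (j : ℤ) : A :=
  j.negOnePow • (q ^ rrExponent j * gaussBinomInt q n ((n - 5 * j) / 2))

def schurPolyAlt (n : ℕ) : A := ∑ j ∈ Icc (-(n : ℤ)) n, schurTerm q n j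

lemma schurPoly_succ_succ (m : ℕ) :
    schurPoly q (m + 2) = schurPoly q (m + 1) + q ^ (m + 1) * schurPoly q m := by
  have hterm (k : ℕ) : q ^ ((k + 1) ^ 2) * gaussBinom q (m + 2 - (k + 1)) (k + 1) =
      q ^ ((k + 1) ^ 2) * gaussBinom q (m - k) (k + 1) +
        q ^ (m + 1) * (q ^ (k ^ 2) * gaussBinom q (m - k) k) := by
    rcases le_or_gt (2 * k) m with hk | hk
    · rw [show m + 2 - (k + 1) = m - k + 1 by omega, gaussBinom_succ_succ', mul_add, ← mul_assoc,
        ← mul_assoc, ← pow_add, ← pow_add, show (k + 1) ^ 2 + (m - k - k) = m + 1 + k ^ 2 by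
          zify [hk, (by omega : k ≤ m - k), (by omega : k ≤ m)]; ring]
    · rw [gaussBinom_eq_zero_of_lt q (by omega : m - k < k),
        gaussBinom_eq_zero_of_lt q (by omega : m - k < k + 1),
        gaussBinom_eq_zero_of_lt q (by omega : m + 2 - (k + 1) < k + 1)]
      ring
  simp only [schurPoly]
  rw [sum_range_succ' _ (m + 2), sum_range_succ' (fun k => q ^ k ^ 2 * gaussBinom q (m + 1 - k) k)]
  simp_rw [hterm, Nat.add_sub_add_right, sum_add_distrib, ← mul_sum]
  rw [sum_range_succ _ (m + 1),
    sum_range_succ (fun k => q ^ (k ^ 2) * gaussBinom q (m - k) k) (m + 1)]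
  rw [gaussBinom_eq_zero_of_lt q (by omega : m - (m + 1) < m + 1 + 1),
    gaussBinom_eq_zero_of_lt q (by omega : m - (m + 1) < m + 1), gaussBinom_zero_right,
    gaussBinom_zero_right]
  ring

-- What the two Pascal rules leave over in `schurTerm_succ_succ`; it telescopes in `j`.
def schurCorrection (m : ℕ) (j : ℤ) : A :=
  if Even ((m : ℤ) + j) then
    j.negOnePow • (q ^ (rrExponent j + (((m : ℤ) + 2 - 5 * j) / 2).toNat) *
      gaussBinomInt q m ((m + 2 - 5 * j) / 2))
  else 0

lemma schurTerm_eq_zero {n : ℕ} {j : ℤ} (h : (n : ℤ) < 5 * j ∨ 5 * j < -n - 1) :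
    schurTerm q n j = 0 := by
  rw [schurTerm, gaussBinomInt_eq_zero q (by omega), mul_zero, smul_zero]

lemma schurCorrection_eq_zero {m : ℕ} {j : ℤ} (h : (m : ℤ) + 2 < 5 * j ∨ 5 * j < 2 - m) :
    schurCorrection q m j = 0 := by
  unfold schurCorrection
  split_ifs with he
  · obtain ⟨r, hr⟩ := he
    rw [gaussBinomInt_eq_zero q (by omega), mul_zero, smul_zero]
  · rfl

lemma schurTerm_succ_succ_of_even {m : ℕ} {j : ℤ} (he : Even ((m : ℤ) + j)) :
    schurTerm q (m + 2) j = schurTerm q (m + 1) j + q ^ (m + 1) * schurTerm q m j +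
      schurCorrection q m j := by
  obtain ⟨r, hr⟩ := he
  set k := ((m : ℤ) + 2 - 5 * j) / 2 with hk
  have e1 : gaussBinomInt q (m + 2) k =
      gaussBinomInt q (m + 1) (k - 1) + q ^ k.toNat * gaussBinomInt q (m + 1) k :=
    gaussBinomInt_succ q (m + 1) k
  have e2 := gaussBinomInt_succ' q m k
  have e3 : q ^ k.toNat * q ^ ((m : ℤ) + 1 - k).toNat * gaussBinomInt q m (k - 1) =
      q ^ (m + 1) * gaussBinomInt q m (k - 1) := by
    rw [← pow_add]
    exact mul_gaussBinomInt_congr q fun h₀ h₁ => congrArg (q ^ ·) (by omega)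
  rw [schurTerm, schurTerm, schurTerm, schurCorrection, if_pos ⟨r, hr⟩,
    show (((m + 2 : ℕ) : ℤ) - 5 * j) / 2 = k by omega,
    show (((m + 1 : ℕ) : ℤ) - 5 * j) / 2 = k - 1 by omega,
    show ((m : ℤ) - 5 * j) / 2 = k - 1 by omega]
  simp only [Units.smul_def, zsmul_eq_mul, pow_add]
  linear_combination (j.negOnePow * q ^ rrExponent j : A) * (e1 + q ^ k.toNat * e2 + e3)

lemma schurTerm_succ_succ_of_odd {m : ℕ} {j : ℤ} (ho : Odd ((m : ℤ) + j)) :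
    schurTerm q (m + 2) j = schurTerm q (m + 1) j + q ^ (m + 1) * schurTerm q m j -
      schurCorrection q m (j + 1) := by
  obtain ⟨r, hr⟩ := ho
  set k := ((m : ℤ) + 1 - 5 * j) / 2 with hk
  have e1 : gaussBinomInt q (m + 2) k = gaussBinomInt q (m + 1) k +
      q ^ (((m + 1 : ℕ) : ℤ) + 1 - k).toNat * gaussBinomInt q (m + 1) (k - 1) :=
    gaussBinomInt_succ' q (m + 1) k
  have e2 := gaussBinomInt_succ q m (k - 1)
  have e3 : q ^ (((m + 1 : ℕ) : ℤ) + 1 - k).toNat * q ^ (k - 1).toNat *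
      gaussBinomInt q m (k - 1) = q ^ (m + 1) * gaussBinomInt q m (k - 1) := by
    rw [← pow_add]
    exact mul_gaussBinomInt_congr q fun h₀ h₁ => congrArg (q ^ ·) (by omega)
  have e4 : q ^ rrExponent j * q ^ (((m + 1 : ℕ) : ℤ) + 1 - k).toNat *
      gaussBinomInt q m (k - 1 - 1) =
      q ^ (rrExponent (j + 1) + (k - 1 - 1).toNat) * gaussBinomInt q m (k - 1 - 1) := by
    rw [← pow_add]
    refine mul_gaussBinomInt_congr q fun h₀ h₁ => congrArg (q ^ ·) ?_
    have := rrExponent_add_one j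
    omega
  rw [schurTerm, schurTerm, schurTerm, schurCorrection, if_pos ⟨r + 1, by omega⟩,
    show (((m + 2 : ℕ) : ℤ) - 5 * j) / 2 = k by omega,
    show (((m + 1 : ℕ) : ℤ) - 5 * j) / 2 = k by omega,
    show ((m : ℤ) - 5 * j) / 2 = k - 1 by omega,
    show ((m : ℤ) + 2 - 5 * (j + 1)) / 2 = k - 1 - 1 by omega, Int.negOnePow_succ]
  simp only [Units.smul_def, zsmul_eq_mul, Units.val_neg, Int.cast_neg, pow_add] at e3 e4 ⊢
  linear_combination (j.negOnePow * q ^ rrExponent j : A) * e1 +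
    (j.negOnePow * q ^ rrExponent j * q ^ (((m + 1 : ℕ) : ℤ) + 1 - k).toNat : A) * e2 +
    (j.negOnePow * q ^ rrExponent j : A) * e3 + (j.negOnePow : A) * e4

lemma schurTerm_succ_succ (m : ℕ) (j : ℤ) :
    schurTerm q (m + 2) j = schurTerm q (m + 1) j + q ^ (m + 1) * schurTerm q m j +
      schurCorrection q m j - schurCorrection q m (j + 1) := by
  rcases Int.even_or_odd ((m : ℤ) + j) with he | ho
  · have h : schurCorrection q m (j + 1) = 0 := by
      rw [schurCorrection, if_neg (by rw [← add_assoc, Int.not_even_iff_odd]; exact he.add_one)]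
    rw [schurTerm_succ_succ_of_even q he, h, sub_zero]
  · have h : schurCorrection q m j = 0 := by
      rw [schurCorrection, if_neg (Int.not_even_iff_odd.2 ho)]
    rw [schurTerm_succ_succ_of_odd q ho, h, add_zero]

lemma sum_schurTerm {n : ℕ} {c d : ℤ} (hc : c ≤ -n) (hd : n ≤ d) :
    ∑ j ∈ Icc c d, schurTerm q n j = schurPolyAlt q n :=
  sum_Icc_eq_sum_Icc_of_support hc hd fun j hj => by
    by_contra h
    exact hj (schurTerm_eq_zero q (by omega))

lemma schurPolyAlt_succ_succ (m : ℕ) :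
    schurPolyAlt q (m + 2) = schurPolyAlt q (m + 1) + q ^ (m + 1) * schurPolyAlt q m := by
  rw [schurPolyAlt]
  simp_rw [schurTerm_succ_succ]
  rw [sum_sub_distrib, sum_add_distrib, sum_add_distrib, ← mul_sum,
    sum_Icc_comp_add_one _ (schurCorrection_eq_zero q (by omega))
      (schurCorrection_eq_zero q (by omega)),
    sum_schurTerm q (by omega) (by omega), sum_schurTerm q (by omega) (by omega),
    add_sub_cancel_right]

theorem schurPoly_eq_schurPolyAlt (n : ℕ) : schurPoly q n = schurPolyAlt q n := by
  induction n using Nat.twoStepInduction with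
  | zero => simp [schurPoly, schurPolyAlt, schurTerm, rrExponent]
  | one =>
    rw [schurPolyAlt, sum_eq_single 0
      (fun j hj hj₀ => schurTerm_eq_zero q (by simp only [mem_Icc] at hj; omega)) (by simp)]
    simp [schurPoly, sum_range_succ, schurTerm, rrExponent]
  | more n h₀ h₁ => rw [schurPoly_succ_succ, schurPolyAlt_succ_succ, h₀, h₁]

end Schur

section Congruence

variable {R : Type*} [CommRing R] {I : Ideal R}

lemma prod_range_smodEq_prod_range {f : ℕ → R} {r m : ℕ} (hrm : r ≤ m)
    (hf : ∀ k, r ≤ k → k < m → f k ≡ 1 [SMOD I]) :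
    ∏ k ∈ range m, f k ≡ ∏ k ∈ range r, f k [SMOD I] := by
  rw [← prod_range_mul_prod_Ico f hrm]
  conv_rhs => rw [← mul_one (∏ k ∈ range r, f k)]
  refine SModEq.rfl.mul ?_
  simpa using SModEq.prod fun k hk => hf k (mem_Ico.1 hk).1 (mem_Ico.1 hk).2

lemma sum_range_smodEq_sum_range {f : ℕ → R} {r m : ℕ} (hrm : r ≤ m)
    (hf : ∀ k, r ≤ k → k < m → f k ≡ 0 [SMOD I]) :
    ∑ k ∈ range m, f k ≡ ∑ k ∈ range r, f k [SMOD I] := by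
  rw [← sum_range_add_sum_Ico f hrm]
  conv_rhs => rw [← add_zero (∑ k ∈ range r, f k)]
  refine SModEq.rfl.add ?_
  simpa using SModEq.sum fun k hk => hf k (mem_Ico.1 hk).1 (mem_Ico.1 hk).2

end Congruence

section PowerSeries

variable {K : Type*} [Field K]

lemma smodEq_X_pow_iff {M : ℕ} {f g : K⟦X⟧} :
    f ≡ g [SMOD Ideal.span {X ^ M}] ↔ X ^ M ∣ f - g := by
  rw [SModEq.sub_mem, Ideal.mem_span_singleton]

lemma coeff_eq_of_smodEq {M i : ℕ} {f g : K⟦X⟧} (h : f ≡ g [SMOD Ideal.span {X ^ M}])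
    (hi : i < M) : coeff i f = coeff i g := by
  rw [← sub_eq_zero, ← map_sub]
  exact X_pow_dvd_iff.1 (smodEq_X_pow_iff.1 h) i hi

lemma smodEq_of_X_pow_le {M M' : ℕ} {f g : K⟦X⟧} (hM : M' ≤ M)
    (h : f ≡ g [SMOD Ideal.span {X ^ M}]) : f ≡ g [SMOD Ideal.span {X ^ M'}] :=
  smodEq_X_pow_iff.2 ((pow_dvd_pow X hM).trans (smodEq_X_pow_iff.1 h))

lemma X_pow_mul_smodEq_zero {M a : ℕ} (h : M ≤ a) (f : K⟦X⟧) :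
    X ^ a * f ≡ 0 [SMOD Ideal.span {X ^ M}] :=
  smodEq_X_pow_iff.2 (by rw [sub_zero]; exact (pow_dvd_pow X h).mul_right f)

lemma X_pow_mul_smodEq_X_pow_mul {M a : ℕ} {f g : K⟦X⟧}
    (h : a < M → f ≡ g [SMOD Ideal.span {X ^ M}]) :
    X ^ a * f ≡ X ^ a * g [SMOD Ideal.span {X ^ M}] := by
  rcases lt_or_ge a M with ha | ha
  · exact SModEq.rfl.mul (h ha)
  · exact (X_pow_mul_smodEq_zero ha f).trans (X_pow_mul_smodEq_zero ha g).symm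

lemma one_sub_X_pow_smodEq_one {M a : ℕ} (h : M ≤ a) :
    1 - X ^ a ≡ 1 [SMOD Ideal.span {(X : K⟦X⟧) ^ M}] := by
  simpa using (SModEq.refl 1).sub (X_pow_mul_smodEq_zero h (1 : K⟦X⟧))

lemma inv_smodEq_inv {I : Ideal K⟦X⟧} {f g : K⟦X⟧} (hf : constantCoeff f ≠ 0)
    (hg : constantCoeff g ≠ 0) (h : f ≡ g [SMOD I]) : f⁻¹ ≡ g⁻¹ [SMOD I] := by
  have key : f⁻¹ - g⁻¹ = f⁻¹ * (g - f) * g⁻¹ := by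
    linear_combination
      PowerSeries.inv_mul_cancel f hf * g⁻¹ - f⁻¹ * PowerSeries.mul_inv_cancel g hg
  rw [SModEq.sub_mem, key]
  exact I.mul_mem_right _ (I.mul_mem_left _ (SModEq.sub_mem.1 h.symm))

lemma inv_prod_eq_prod_inv {ι : Type*} (s : Finset ι) (f : ι → K⟦X⟧) :
    (∏ i ∈ s, f i)⁻¹ = ∏ i ∈ s, (f i)⁻¹ := by
  classical
  induction s using Finset.induction_on with
  | empty => simp
  | insert i s hi ih => rw [prod_insert hi, prod_insert hi, PowerSeries.mul_inv_rev, ih, mul_comm]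

lemma constantCoeff_qPochhammer_X_pow {t : ℕ} (ht : 0 < t) (n : ℕ) :
    constantCoeff (qPochhammer ((X : K⟦X⟧) ^ t) n) = 1 := by
  simp [qPochhammer, map_prod, ht.ne']

lemma qPochhammer_X_pow_smodEq {t a b : ℕ} (hab : a ≤ b) :
    qPochhammer ((X : K⟦X⟧) ^ t) b ≡ qPochhammer (X ^ t) a
      [SMOD Ideal.span {X ^ (t * (a + 1))}] :=
  prod_range_smodEq_prod_range hab fun i hi _ => by
    rw [← pow_mul]
    exact one_sub_X_pow_smodEq_one (Nat.mul_le_mul_left t (by omega))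

lemma inv_qPochhammer_X_pow_smodEq {t a b : ℕ} (ht : 0 < t) (hab : a ≤ b) :
    (qPochhammer ((X : K⟦X⟧) ^ t) b)⁻¹ ≡ (qPochhammer (X ^ t) a)⁻¹
      [SMOD Ideal.span {X ^ (t * (a + 1))}] := by
  refine inv_smodEq_inv ?_ ?_ (qPochhammer_X_pow_smodEq hab) <;>
    simp [constantCoeff_qPochhammer_X_pow ht]

lemma gaussBinom_X_pow_smodEq {t n k : ℕ} (ht : 0 < t) (hk : k ≤ n) :
    gaussBinom ((X : K⟦X⟧) ^ t) n k ≡ (qPochhammer (X ^ t) k)⁻¹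
      [SMOD Ideal.span {X ^ (t * (n - k + 1))}] := by
  have hP (i : ℕ) : constantCoeff (qPochhammer ((X : K⟦X⟧) ^ t) i) ≠ 0 := by
    simp [constantCoeff_qPochhammer_X_pow ht]
  have hG : gaussBinom ((X : K⟦X⟧) ^ t) n k = qPochhammer (X ^ t) n *
      (qPochhammer (X ^ t) (n - k))⁻¹ * (qPochhammer (X ^ t) k)⁻¹ := by
    rw [eq_mul_inv_iff_mul_eq (hP k), eq_mul_inv_iff_mul_eq (hP (n - k)),
      ← gaussBinom_mul_qPochhammer _ hk]
  have h := ((qPochhammer_X_pow_smodEq (K := K) (t := t) (Nat.sub_le n k)).mul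
    (SModEq.refl (qPochhammer (X ^ t) (n - k))⁻¹)).mul (SModEq.refl (qPochhammer (X ^ t) k)⁻¹)
  rwa [PowerSeries.mul_inv_cancel _ (hP (n - k)), one_mul, ← hG] at h

lemma gaussBinom_X_pow_smodEq_of_le {t n k r M : ℕ} (ht : 0 < t) (hrk : r ≤ k)
    (hrn : r + k ≤ n) (hM : M ≤ t * (r + 1)) :
    gaussBinom ((X : K⟦X⟧) ^ t) n k ≡ (qPochhammer (X ^ t) r)⁻¹
      [SMOD Ideal.span {X ^ M}] :=
  (smodEq_of_X_pow_le (hM.trans (Nat.mul_le_mul_left t (by omega)))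
    (gaussBinom_X_pow_smodEq ht (by omega))).trans
    (smodEq_of_X_pow_le hM (inv_qPochhammer_X_pow_smodEq ht hrk))

lemma schurPoly_X_smodEq {r m : ℕ} (hm : 3 * r ≤ m) :
    schurPoly (X : K⟦X⟧) m ≡ ∑ n ∈ range r, X ^ (n ^ 2) * (qPochhammer X n)⁻¹
      [SMOD Ideal.span {X ^ r}] := by
  have htail : schurPoly (X : K⟦X⟧) m ≡
      ∑ k ∈ range r, X ^ (k ^ 2) * gaussBinom X (m - k) k [SMOD Ideal.span {X ^ r}] :=
    sum_range_smodEq_sum_range (by omega) fun k hk _ => X_pow_mul_smodEq_zero (by nlinarith) _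
  refine htail.trans (SModEq.sum fun k hk => SModEq.rfl.mul ?_)
  have hk : k < r := mem_range.1 hk
  have h := gaussBinom_X_pow_smodEq (K := K) (t := 1) one_pos (by omega : k ≤ m - k)
  rw [pow_one] at h
  exact smodEq_of_X_pow_le (by omega) h

lemma sum_smodEq_thetaSum_mul {m M : ℕ} {f : ℤ → K⟦X⟧} {g : K⟦X⟧}
    (h : ∀ j : ℤ, -(M : ℤ) < j → j < M → f j ≡ g [SMOD Ideal.span {X ^ M}]) :
    ∑ j ∈ Icc (-(m : ℤ)) m, j.negOnePow • (X ^ rrExponent j * f j) ≡ thetaSum X m * g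
      [SMOD Ideal.span {X ^ M}] := by
  rw [thetaSum, sum_mul]
  refine SModEq.sum fun j _ => ?_
  rw [smul_mul_assoc]
  refine (X_pow_mul_smodEq_X_pow_mul fun he => h j ?_ ?_).zsmul (j.negOnePow : ℤ) <;>
    nlinarith [sq_le_rrExponent j]

-- For `|j| < r ≤ m / 15`, both `(m - 5 j) / 2` and `m - (m - 5 j) / 2` are at least `5 r`.
lemma schurPolyAlt_X_smodEq {r m : ℕ} (hm : 15 * r ≤ m) :
    schurPolyAlt (X : K⟦X⟧) m ≡ thetaSum X m * (qPochhammer X (5 * r))⁻¹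
      [SMOD Ideal.span {X ^ r}] := by
  refine sum_smodEq_thetaSum_mul fun j hj₀ hj₁ => ?_
  rw [gaussBinomInt, if_pos (by omega)]
  simpa using gaussBinom_X_pow_smodEq_of_le (K := K) (t := 1) (r := 5 * r) one_pos (by omega)
    (by omega) (by omega)

lemma finiteJacobi_X_smodEq {r m : ℕ} (hm : 2 * r ≤ m) :
    finiteJacobi (X : K⟦X⟧) m m ≡ thetaSum X m * (qPochhammer (X ^ 5) r)⁻¹
      [SMOD Ideal.span {X ^ r}] := by
  refine sum_smodEq_thetaSum_mul fun j hj₀ hj₁ => ?_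
  rw [gaussBinomInt, if_pos (by omega)]
  exact gaussBinom_X_pow_smodEq_of_le (by norm_num) (by omega) (by omega) (by omega)

lemma thetaSum_mul_inv_qPochhammer_smodEq (r : ℕ) :
    thetaSum (X : K⟦X⟧) (15 * r) * (qPochhammer X (5 * r))⁻¹ ≡
      (∏ k ∈ range r, (1 - X ^ (5 * k + 1)) * (1 - X ^ (5 * k + 4)))⁻¹
      [SMOD Ideal.span {X ^ r}] := by
  set P := ∏ k ∈ range r, (1 - (X : K⟦X⟧) ^ (5 * k + 1)) * (1 - X ^ (5 * k + 4))
  set Q := fun n => ∏ k ∈ range n, (1 - (X : K⟦X⟧) ^ (5 * k + 2)) * (1 - X ^ (5 * k + 3))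
  have hQ : constantCoeff (Q r) ≠ 0 := by simp [Q, map_prod]
  have hjacobi : finiteJacobi (X : K⟦X⟧) (15 * r) (15 * r) = Q (15 * r) := by
    rw [finiteJacobi_eq_prod, ← prod_mul_distrib]
    exact prod_congr rfl fun k _ => mul_comm _ _
  have htail : Q (15 * r) ≡ Q r [SMOD Ideal.span {X ^ r}] :=
    prod_range_smodEq_prod_range (by omega) fun k hk _ => by
      simpa using (one_sub_X_pow_smodEq_one (K := K) (M := r) (by omega : r ≤ 5 * k + 2)).mul
        (one_sub_X_pow_smodEq_one (by omega : r ≤ 5 * k + 3))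
  rw [← hjacobi] at htail
  have htheta := (finiteJacobi_X_smodEq (K := K) (by omega : 2 * r ≤ 15 * r)).symm.trans htail
  have h := htheta.mul (SModEq.refl ((Q r)⁻¹ * P⁻¹))
  rw [qPochhammer_five_mul, PowerSeries.mul_inv_rev, PowerSeries.mul_inv_rev, ← mul_assoc]
  rwa [← mul_assoc (Q r), PowerSeries.mul_inv_cancel _ hQ, one_mul] at h

end PowerSeries

end

end RogersRamanujan

open RogersRamanujan

/-- The Rogers–Ramanujan identity, as an identity of formal power series over `ℚ`,
stated coefficient-wise: for every `N`, the `N`-th coefficient of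
`∏_{k≥1} ((1-q^{5k-4})(1-q^{5k-1}))⁻¹` (truncated at the first `N+1` factors, which
determines all coefficients up to degree `N`) equals the `N`-th coefficient of
`Σ_{n≥0} q^{n²}/((1-q)···(1-q^n))` (likewise truncated). -/
theorem stmt8 (N : ℕ) :
    PowerSeries.coeff (R := ℚ) N
        (∏ k ∈ range (N + 1),
          ((1 - (X : PowerSeries ℚ) ^ (5 * (k + 1) - 4)) *
            (1 - (X : PowerSeries ℚ) ^ (5 * (k + 1) - 1)))⁻¹)
      = PowerSeries.coeff (R := ℚ) N
        (∑ n ∈ range (N + 1),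
          (X : PowerSeries ℚ) ^ (n ^ 2) *
            (∏ j ∈ range n, (1 - (X : PowerSeries ℚ) ^ (j + 1)))⁻¹) := by
  have hprod : ∏ k ∈ range (N + 1),
      ((1 - (X : ℚ⟦X⟧) ^ (5 * (k + 1) - 4)) * (1 - X ^ (5 * (k + 1) - 1)))⁻¹ =
      (∏ k ∈ range (N + 1), (1 - X ^ (5 * k + 1)) * (1 - X ^ (5 * k + 4)))⁻¹ := by
    rw [inv_prod_eq_prod_inv]
    refine prod_congr rfl fun k _ => ?_
    rw [show 5 * (k + 1) - 4 = 5 * k + 1 by omega, show 5 * (k + 1) - 1 = 5 * k + 4 by omega]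
  have hschur := schurPoly_eq_schurPolyAlt (X : ℚ⟦X⟧) (15 * (N + 1))
  have key := (thetaSum_mul_inv_qPochhammer_smodEq (K := ℚ) (N + 1)).symm.trans
    ((schurPolyAlt_X_smodEq le_rfl).symm.trans (hschur ▸ schurPoly_X_smodEq (by omega)))
  rw [hprod]
  exact coeff_eq_of_smodEq key N.lt_succ_self
end

section
/- For every non-negative integer k, the product (q;q)_k divides (q^{k+1};q)_{k+1}/(1-q) in ℤ[q]. -/
/-!
Writing `(a;q)_m = ∏_{j<m} (1 - a q^j)`, the identity
`(q^{n+2};q)_{m+1} = (q^{n+1};q)_{m+1} + q^{n+1} (1 - q^{m+1}) (q^{n+2};q)_m`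
(the `q`-Pascal rule for Gaussian binomials) shows by induction that `(q;q)_m` divides
`(q^{n+1};q)_m` for all `n, m`. With `n = k`, `m = k + 1` this gives `(q;q)_{k+1} ∣ (q^{k+1};q)_{k+1}`,
and `(1 - q) (q;q)_k ∣ (q;q)_{k+1}` because `1 - q ∣ 1 - q^{k+1}`.
-/

open Polynomial Finset

section QPochhammer

variable {R : Type*} [CommRing R]

def qPochhammer (a q : R) (m : ℕ) : R :=
  ∏ j ∈ range m, (1 - a * q ^ j)

@[simp]
theorem qPochhammer_zero (a q : R) : qPochhammer a q 0 = 1 :=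
  prod_range_zero _

theorem qPochhammer_succ (a q : R) (m : ℕ) :
    qPochhammer a q (m + 1) = qPochhammer a q m * (1 - a * q ^ m) :=
  prod_range_succ _ m

theorem qPochhammer_succ' (a q : R) (m : ℕ) :
    qPochhammer a q (m + 1) = (1 - a) * qPochhammer (a * q) q m := by
  simp only [qPochhammer, prod_range_succ', pow_succ, pow_zero, mul_one, mul_assoc, mul_comm]

theorem qPochhammer_pow_succ_succ (q : R) (n m : ℕ) :
    qPochhammer (q ^ (n + 2)) q (m + 1) =
      qPochhammer (q ^ (n + 1)) q (m + 1) + q ^ (n + 1) * (1 - q ^ (m + 1)) *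
        qPochhammer (q ^ (n + 2)) q m := by
  rw [qPochhammer_succ, qPochhammer_succ', ← pow_succ]
  ring

theorem qPochhammer_dvd_qPochhammer_pow_succ (q : R) (n m : ℕ) :
    qPochhammer q q m ∣ qPochhammer (q ^ (n + 1)) q m := by
  induction m generalizing n with
  | zero => simp
  | succ m ihm =>
    induction n with
    | zero => simp
    | succ n ihn =>
      rw [qPochhammer_pow_succ_succ]
      refine dvd_add ihn ?_
      rw [qPochhammer_succ, mul_comm, ← pow_succ']
      exact mul_dvd_mul (dvd_mul_left _ _) (ihm (n + 1))

theorem one_sub_mul_qPochhammer_dvd_qPochhammer_succ (q : R) (k : ℕ) :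
    (1 - q) * qPochhammer q q k ∣ qPochhammer q q (k + 1) := by
  rw [qPochhammer_succ, mul_comm, ← pow_succ']
  exact mul_dvd_mul_left _ (one_sub_dvd_one_sub_pow q (k + 1))

end QPochhammer

/-- `(q;q)_k` divides `(q^{k+1};q)_{k+1}/(1-q)` in `ℤ[q]`; equivalently,
`(1-q)·(q;q)_k` divides `(q^{k+1};q)_{k+1} = ∏_{j=0}^{k}(1-q^{k+1+j})`. -/
theorem stmt11 (k : ℕ) :
    (1 - X) * ∏ j ∈ range k, (1 - X ^ (j + 1)) ∣
      ∏ j ∈ range (k + 1), (1 - (X : ℤ[X]) ^ (k + 1 + j)) := by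
  have hleft : ∏ j ∈ range k, (1 - (X : ℤ[X]) ^ (j + 1)) = qPochhammer X X k :=
    prod_congr rfl fun j _ => by rw [pow_succ']
  have hright : ∏ j ∈ range (k + 1), (1 - (X : ℤ[X]) ^ (k + 1 + j)) =
      qPochhammer (X ^ (k + 1)) X (k + 1) :=
    prod_congr rfl fun j _ => by rw [pow_add]
  rw [hleft, hright]
  exact (one_sub_mul_qPochhammer_dvd_qPochhammer_succ X k).trans
    (qPochhammer_dvd_qPochhammer_pow_succ X k (k + 1))
end

section
/- The Habiro ring ẑ[q] := lim_← ℤ[q]/((q;q)_k) is isomorphic to the cyclotomic completion ℤ[q]^ℕ := lim_← ℤ[q]/(f(q)), the limit taken over the multiplicative set generated by all cyclotomic polynomials Φ_n(q), n ∈ ℕ, directed by divisibility. -/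
open Polynomial Finset

set_option synthInstance.maxHeartbeats 1000000
set_option maxHeartbeats 1000000

/-- `(q;q)_k = ∏_{j=1}^k (1 - q^j)` in `ℤ[q]`. -/
noncomputable def qPoch (k : ℕ) : Polynomial ℤ :=
  ∏ j ∈ range k, (1 - X ^ (j + 1))

/-- The Habiro ring `lim_← ℤ[q]/((q;q)_k)`, realized as the subring of compatible
families in `Π_k ℤ[q]/((q;q)_k)`. -/
noncomputable def habiroRing : Subring (Π k : ℕ, Polynomial ℤ ⧸ Ideal.span {qPoch k}) where
  carrier := {x | ∀ (k k' : ℕ) (h : k ≤ k'),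
      Ideal.Quotient.factor
        (Ideal.span_singleton_le_span_singleton.mpr
          (Finset.prod_dvd_prod_of_subset _ _ _ (Finset.range_subset_range.mpr h)))
        (x k') = x k}
  mul_mem' := by
    intro a b ha hb k k' h
    rw [Pi.mul_apply, Pi.mul_apply, RingHom.map_mul, ha k k' h, hb k k' h]
    rfl
  one_mem' := by
    intro k k' h
    rw [Pi.one_apply, Pi.one_apply, RingHom.map_one]
    rfl
  add_mem' := by
    intro a b ha hb k k' h
    rw [Pi.add_apply, Pi.add_apply, RingHom.map_add, ha k k' h, hb k k' h]
    rfl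
  zero_mem' := by
    intro k k' h
    rw [Pi.zero_apply, Pi.zero_apply, RingHom.map_zero]
    rfl
  neg_mem' := by
    intro a ha k k' h
    rw [Pi.neg_apply, Pi.neg_apply, RingHom.map_neg, ha k k' h]
    rfl

/-- The multiplicative set `Φ*_S ⊆ R[q]` generated by cyclotomic polynomials
`Φ_n`, `n ∈ S`. -/
noncomputable def cycMonoid (R : Type*) [CommRing R] (S : Set ℕ) : Submonoid (Polynomial R) :=
  Submonoid.closure {f | ∃ n ∈ S, f = cyclotomic n R}

/-- The `S`-cyclotomic completion `R[q]^S = lim_← R[q]/(f)`, `f ∈ Φ*_S`. -/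
noncomputable def cycCompletion (R : Type*) [CommRing R] (S : Set ℕ) :
    Subring (Π f : cycMonoid R S, Polynomial R ⧸ Ideal.span {(f : Polynomial R)}) where
  carrier := {x | ∀ (f g : cycMonoid R S) (h : (f : Polynomial R) ∣ (g : Polynomial R)),
      Ideal.Quotient.factor (Ideal.span_singleton_le_span_singleton.mpr h) (x g) = x f}
  mul_mem' := by
    intro a b ha hb f g h
    rw [Pi.mul_apply, Pi.mul_apply, RingHom.map_mul, ha f g h, hb f g h]
  one_mem' := by
    intro f g h
    rw [Pi.one_apply, Pi.one_apply, RingHom.map_one]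
  add_mem' := by
    intro a b ha hb f g h
    rw [Pi.add_apply, Pi.add_apply, RingHom.map_add, ha f g h, hb f g h]
  zero_mem' := by
    intro f g h
    rw [Pi.zero_apply, Pi.zero_apply, RingHom.map_zero]
  neg_mem' := by
    intro a ha f g h
    rw [Pi.neg_apply, Pi.neg_apply, RingHom.map_neg, ha f g h]

/-! Both rings are limits of `ℤ[q] ⧸ (f)` along a downward directed family of principal
ideals, and two such limits are isomorphic as soon as each family is cofinal in the other.
Up to sign, `(q;q)_k = ∏_{j ≤ k} (q^j - 1)` is a product of cyclotomic polynomials; conversely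
`Φ_n ∣ q^(n(m+1)) - 1`, so `Φ_n · (q;q)_m ∣ (q;q)_(n(m+1))`, and by induction every element
of the cyclotomic monoid divides some `(q;q)_k`. -/

open Ideal

section QuotientLimit

open Ideal.Quotient

variable {R ι κ : Type*} [CommRing R]

noncomputable def quotientLimit (I : ι → Ideal R) : Subring (Π i, R ⧸ I i) where
  carrier := {x | ∀ i j (h : I j ≤ I i), factor h (x j) = x i}
  mul_mem' ha hb i j h := by simp only [Pi.mul_apply, map_mul, ha i j h, hb i j h]
  one_mem' i j h := by simp only [Pi.one_apply, map_one]
  add_mem' ha hb i j h := by simp only [Pi.add_apply, map_add, ha i j h, hb i j h]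
  zero_mem' i j h := by simp only [Pi.zero_apply, map_zero]
  neg_mem' ha i j h := by simp only [Pi.neg_apply, map_neg, ha i j h]

theorem mem_quotientLimit_iff_of_antitone [Preorder ι] [IsDirectedOrder ι] {I : ι → Ideal R}
    (hI : Antitone I) {x : Π i, R ⧸ I i} :
    x ∈ quotientLimit I ↔ ∀ i j (h : i ≤ j), factor (hI h) (x j) = x i := by
  refine ⟨fun hx i j h => hx i j (hI h), fun hx i j h => ?_⟩
  obtain ⟨k, hik, hjk⟩ := directed_of (· ≤ ·) i j
  rw [← hx i k hik, ← hx j k hjk, factor_comp_apply]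

theorem directed_span_singleton (M : Submonoid R) :
    Directed (· ≥ ·) fun f : M => span {(f : R)} :=
  fun f g => ⟨f * g, span_singleton_le_span_singleton.mpr (dvd_mul_right _ _),
    span_singleton_le_span_singleton.mpr (dvd_mul_left _ _)⟩

namespace quotientLimit

variable {I : ι → Ideal R} {J : κ → Ideal R}

theorem factor_eq_factor (hI : Directed (· ≥ ·) I) {x : Π i, R ⧸ I i}
    (hx : x ∈ quotientLimit I) {K : Ideal R} {i i' : ι} (h : I i ≤ K) (h' : I i' ≤ K) :
    factor h (x i) = factor h' (x i') := by
  obtain ⟨k, hik, hi'k⟩ := hI i i'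
  rw [← hx i k hik, ← hx i' k hi'k, factor_comp_apply, factor_comp_apply]

noncomputable def map (hI : Directed (· ≥ ·) I) (hIJ : ∀ j, ∃ i, I i ≤ J j) :
    quotientLimit I →+* quotientLimit J :=
  RingHom.codRestrict
    (RingHom.pi fun j => (factor (hIJ j).choose_spec).comp
      ((Pi.evalRingHom _ (hIJ j).choose).comp (quotientLimit I).subtype))
    _ fun x i j h => (factor_comp_apply (hIJ j).choose_spec h _).trans
      (factor_eq_factor hI x.2 _ (hIJ i).choose_spec)

theorem map_apply (hI : Directed (· ≥ ·) I) (hIJ : ∀ j, ∃ i, I i ≤ J j)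
    (x : quotientLimit I) {i : ι} {j : κ} (h : I i ≤ J j) :
    (map hI hIJ x : Π j, R ⧸ J j) j = factor h (x.1 i) :=
  factor_eq_factor hI x.2 (hIJ j).choose_spec h

theorem map_map (hI : Directed (· ≥ ·) I) (hJ : Directed (· ≥ ·) J)
    (hIJ : ∀ j, ∃ i, I i ≤ J j) (hJI : ∀ i, ∃ j, J j ≤ I i) (x : quotientLimit I) :
    map hJ hJI (map hI hIJ x) = x := by
  refine Subtype.ext (funext fun i => ?_)
  obtain ⟨j, hj⟩ := hJI i
  obtain ⟨i', hi'⟩ := hIJ j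
  rw [map_apply _ _ _ hj, map_apply _ _ _ hi', factor_comp_apply]
  exact x.2 i i' _

noncomputable def equivOfCofinal (hI : Directed (· ≥ ·) I) (hJ : Directed (· ≥ ·) J)
    (hIJ : ∀ j, ∃ i, I i ≤ J j) (hJI : ∀ i, ∃ j, J j ≤ I i) :
    quotientLimit I ≃+* quotientLimit J :=
  RingEquiv.ofRingHom (map hI hIJ) (map hJ hJI) (RingHom.ext (map_map hJ hI hJI hIJ))
    (RingHom.ext (map_map hI hJ hIJ hJI))

end quotientLimit

end QuotientLimit

theorem qPoch_dvd_qPoch {k k' : ℕ} (h : k ≤ k') : qPoch k ∣ qPoch k' :=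
  prod_dvd_prod_of_subset _ _ _ (range_subset_range.mpr h)

theorem qPoch_mul_one_sub_X_pow_dvd {m N : ℕ} (h : m < N) :
    qPoch m * (1 - X ^ N) ∣ qPoch N := by
  obtain ⟨N, rfl⟩ := Nat.exists_eq_add_one_of_ne_zero (Nat.ne_zero_of_lt h)
  have hsucc : qPoch (N + 1) = qPoch N * (1 - X ^ (N + 1)) := prod_range_succ _ _
  rw [hsucc]
  exact mul_dvd_mul_right (qPoch_dvd_qPoch (Nat.lt_succ_iff.mp h)) _

theorem exists_cyclotomic_mul_qPoch_dvd (n m : ℕ) :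
    ∃ N, cyclotomic n ℤ * qPoch m ∣ qPoch N := by
  rcases Nat.eq_zero_or_pos n with rfl | hn
  · exact ⟨m, by rw [cyclotomic_zero, one_mul]⟩
  refine ⟨n * (m + 1), ?_⟩
  have hΦ : cyclotomic n ℤ ∣ 1 - X ^ (n * (m + 1)) := by
    rw [← neg_sub, dvd_neg]
    exact (cyclotomic.dvd_X_pow_sub_one n ℤ).trans (pow_one_sub_dvd_pow_mul_sub_one _ _ _)
  have hm : m < n * (m + 1) := Nat.lt_of_lt_of_le m.lt_succ_self (Nat.le_mul_of_pos_left _ hn)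
  rw [mul_comm]
  exact (mul_dvd_mul_left _ hΦ).trans (qPoch_mul_one_sub_X_pow_dvd hm)

theorem exists_mul_qPoch_dvd_of_mem_cycMonoid {S : Set ℕ} {f : ℤ[X]}
    (hf : f ∈ cycMonoid ℤ S) (m : ℕ) : ∃ N, f * qPoch m ∣ qPoch N := by
  induction hf using Submonoid.closure_induction generalizing m with
  | mem f hf =>
    obtain ⟨n, -, rfl⟩ := hf
    exact exists_cyclotomic_mul_qPoch_dvd n m
  | one => exact ⟨m, by rw [one_mul]⟩
  | mul f g _ _ hf hg =>
    obtain ⟨N, hN⟩ := hg m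
    obtain ⟨N', hN'⟩ := hf N
    exact ⟨N', (mul_assoc f g _ ▸ mul_dvd_mul_left f hN).trans hN'⟩

theorem exists_dvd_qPoch_of_mem_cycMonoid {S : Set ℕ} {f : ℤ[X]} (hf : f ∈ cycMonoid ℤ S) :
    ∃ k, f ∣ qPoch k := by
  simpa [qPoch] using exists_mul_qPoch_dvd_of_mem_cycMonoid hf 0

theorem X_pow_sub_one_mem_cycMonoid (R : Type*) [CommRing R] {S : Set ℕ} {n : ℕ}
    (hn : 0 < n) (hS : ↑n.divisors ⊆ S) : X ^ n - 1 ∈ cycMonoid R S := by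
  rw [← prod_cyclotomic_eq_X_pow_sub_one hn R]
  exact prod_mem fun d hd => Submonoid.subset_closure ⟨d, hS hd, rfl⟩

theorem exists_mem_cycMonoid_qPoch_dvd (k : ℕ) : ∃ f ∈ cycMonoid ℤ Set.univ, qPoch k ∣ f :=
  ⟨∏ j ∈ range k, (X ^ (j + 1) - 1),
    prod_mem fun j _ => X_pow_sub_one_mem_cycMonoid ℤ j.succ_pos (Set.subset_univ _),
    prod_dvd_prod_of_dvd _ _ fun j _ => by rw [← neg_sub, neg_dvd]⟩

theorem antitone_span_qPoch : Antitone fun k => span {qPoch k} :=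
  fun _ _ h => span_singleton_le_span_singleton.mpr (qPoch_dvd_qPoch h)

theorem habiroRing_eq_quotientLimit : habiroRing = quotientLimit fun k => span {qPoch k} :=
  SetLike.ext fun _ => (mem_quotientLimit_iff_of_antitone antitone_span_qPoch).symm

theorem cycCompletion_eq_quotientLimit (R : Type*) [CommRing R] (S : Set ℕ) :
    cycCompletion R S = quotientLimit fun f : cycMonoid R S => span {(f : R[X])} :=
  SetLike.ext fun _ => forall₂_congr fun _ _ =>
    ⟨fun hx h => hx (span_singleton_le_span_singleton.mp h),
      fun hx h => hx (span_singleton_le_span_singleton.mpr h)⟩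

/-- The Habiro ring `lim_← ℤ[q]/((q;q)_k)` is isomorphic to the cyclotomic completion
`ℤ[q]^ℕ = lim_← ℤ[q]/(f)` over the multiplicative set generated by all cyclotomic
polynomials, since the family `{(q;q)_k}` is cofinal in that multiplicative set. -/
theorem stmt15 : Nonempty (habiroRing ≃+* cycCompletion ℤ (Set.univ : Set ℕ)) := by
  have hHabiroCofinal (f : cycMonoid ℤ Set.univ) :
      ∃ k, span {qPoch k} ≤ span {(f : ℤ[X])} :=
    (exists_dvd_qPoch_of_mem_cycMonoid f.2).imp fun _ => span_singleton_le_span_singleton.mpr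
  have hCycCofinal (k : ℕ) :
      ∃ f : cycMonoid ℤ Set.univ, span {(f : ℤ[X])} ≤ span {qPoch k} := by
    obtain ⟨f, hf, hk⟩ := exists_mem_cycMonoid_qPoch_dvd k
    exact ⟨⟨f, hf⟩, span_singleton_le_span_singleton.mpr hk⟩
  rw [habiroRing_eq_quotientLimit, cycCompletion_eq_quotientLimit]
  exact ⟨quotientLimit.equivOfCofinal antitone_span_qPoch.directed_ge
    (directed_span_singleton _) hHabiroCofinal hCycCofinal⟩
end
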